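/- arXiv:1810.09081 — 7 statements merged into one kernel-verified Lean document; each statement's English description precedes it below -/
import Mathlib

section
/- If λ satisfies λ^2 + 10λ + 17 = 0 (i.e. λ = −5 ± 2√2), then there exists b ∈ ℂ such that P(x) = x + b satisfies P'' + 2(x^2 + 2x − 1)P' + ((μ − 2)x + 3 + λ)P = 0 with μ = 0. -/
open Polynomial

theorem quartic_s1_case1 (lam : ℂ) (h : lam ^ 2 + 10 * lam + 17 = 0) :
    ∃ b : ℂ,
      derivative (derivative (X + C b)) +
          2 * (X ^ 2 + 2 * X - 1) * derivative (X + C b) +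
          ((C (0 : ℂ) - 2) * X + 3 + C lam) * (X + C b) = 0 := by
  use (7 + lam) / 2
  have h1 : (C ((7 + lam) / 2) : ℂ[X]) * 2 = C lam + 7 := by
    rw [show (2 : ℂ[X]) = C 2 from (map_ofNat C _).symm, ← C_mul,
      show (7 : ℂ[X]) = C 7 from (map_ofNat C _).symm, ← C_add]
    congr 1; ring
  have h2 : (C lam : ℂ[X]) * C ((7 + lam) / 2) + 3 * C ((7 + lam) / 2) - 2 = 0 := by
    rw [show (3 : ℂ[X]) = C 3 from (map_ofNat C _).symm, show (2 : ℂ[X]) = C 2 from (map_ofNat C _).symm,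
      ← C_mul, ← C_mul, ← C_add, ← C_sub]
    rw [show lam * ((7 + lam) / 2) + 3 * ((7 + lam) / 2) - 2 = (lam ^ 2 + 10 * lam + 17) / 2
      from by ring, h]
    norm_num
  simp only [derivative_add, derivative_X, derivative_C, map_zero, derivative_one]
  linear_combination (-X : ℂ[X]) * h1 + h2
end

section
/- A monic degree-2 polynomial P(x) = x^2 + ax + b over ℂ satisfies P'' − 2x^3 P' − (3x^2 − λ − 7x^2)P = 0 if and only if a = 0, b = −λ/4, and λ^2 = 8. -/
open Polynomial

theorem sextic_s2_ode (lam a b : ℂ) :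
    (derivative (derivative (X ^ 2 + C a * X + C b)) -
        2 * X ^ 3 * derivative (X ^ 2 + C a * X + C b) -
        (3 * X ^ 2 - C lam - 7 * X ^ 2) * (X ^ 2 + C a * X + C b) = 0) ↔
      (a = 0 ∧ b = -lam / 4 ∧ lam ^ 2 = 8) := by
  have key : derivative (derivative (X ^ 2 + C a * X + C b)) -
        2 * X ^ 3 * derivative (X ^ 2 + C a * X + C b) -
        (3 * X ^ 2 - C lam - 7 * X ^ 2) * (X ^ 2 + C a * X + C b)
      = C (2 * a) * X ^ 3 + C (4 * b + lam) * X ^ 2 + C (lam * a) * X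
        + C (2 + lam * b) := by
    simp only [derivative_add, derivative_mul, derivative_C, derivative_X,
      derivative_X_pow, derivative_one, derivative_zero, derivative_ofNat, map_add, map_mul,
      map_one, map_ofNat, map_natCast, Nat.cast_ofNat, mul_zero, zero_mul,
      add_zero, zero_add, mul_one]
    ring
  rw [key]
  constructor
  · intro h
    have h0 := congrArg (fun p => coeff p 0) h
    have h1 := congrArg (fun p => coeff p 1) h
    have h2 := congrArg (fun p => coeff p 2) h
    have h3 := congrArg (fun p => coeff p 3) h
    simp only [coeff_add, coeff_C_mul, coeff_X_pow, coeff_X, coeff_C,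
      coeff_zero] at h0 h1 h2 h3
    norm_num at h0 h1 h2 h3
    have hb : b = -lam / 4 := by linear_combination h2 / 4
    refine ⟨h3, hb, ?_⟩
    rw [hb] at h0
    linear_combination -4 * h0
  · rintro ⟨ha, hb, hl⟩
    subst ha hb
    have h4 : (2 : ℂ) + lam * (-lam / 4) = 0 := by linear_combination -hl / 4
    have h5 : (4 : ℂ) * (-lam / 4) + lam = 0 := by ring
    rw [h4, h5, mul_zero, mul_zero, map_zero, zero_mul, zero_mul, zero_mul,
      add_zero, add_zero, zero_add]
end

section
/- A monic degree-4 polynomial P over ℂ satisfies P'' − 2x^3 P' + (8x^2 + λ)P = 0 only if λ(λ^2 − 64) = 0; moreover for λ = 0 the unique such P is x^4 − 3/2, and for λ = ∓8 it is x^4 ± 2x^2 + 1/2. -/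
open Polynomial

theorem sextic_s4_ode (lam : ℂ) (P : Polynomial ℂ) (hmonic : P.Monic) (hdeg : P.degree = 4)
    (heq : derivative (derivative P) - 2 * X ^ 3 * derivative P +
      (8 * X ^ 2 + C lam) * P = 0) :
    lam * (lam ^ 2 - 64) = 0 ∧
    (lam = 0 → P = X ^ 4 - C (3 / 2 : ℂ)) ∧
    (lam = -8 → P = X ^ 4 + 2 * X ^ 2 + C (1 / 2 : ℂ)) ∧
    (lam = 8 → P = X ^ 4 - 2 * X ^ 2 + C (1 / 2 : ℂ)) := by
  set a := P.coeff 3 with ha_def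
  set b := P.coeff 2 with hb_def
  set c := P.coeff 1 with hc_def
  set d := P.coeff 0 with hd_def
  have hnd : P.natDegree = 4 := natDegree_eq_of_degree_eq_some hdeg
  have h4 : P.coeff 4 = 1 := by
    have := hmonic.leadingCoeff
    rwa [leadingCoeff, hnd] at this
  have hP : P = X ^ 4 + C a * X ^ 3 + C b * X ^ 2 + C c * X + C d := by
    ext n
    rcases lt_or_ge n 5 with h | h
    · interval_cases n <;> simp [coeff_X_pow, h4, coeff_one] <;> rfl
    · rw [coeff_eq_zero_of_natDegree_lt (by omega)]
      have h4n : n ≠ 4 := by omega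
      have h3n : n ≠ 3 := by omega
      have h2n : n ≠ 2 := by omega
      have h1n : n ≠ 1 := by omega
      have h0n : n ≠ 0 := by omega
      simp [coeff_X_pow, h4n, h3n, h2n, h1n, h0n, coeff_X, coeff_C]
      exact fun h' => absurd h'.symm h1n
  have key : (derivative (derivative (X ^ 4 + C a * X ^ 3 + C b * X ^ 2 + C c * X + C d))
      - 2 * X ^ 3 * derivative (X ^ 4 + C a * X ^ 3 + C b * X ^ 2 + C c * X + C d) +
      (8 * X ^ 2 + C lam) * (X ^ 4 + C a * X ^ 3 + C b * X ^ 2 + C c * X + C d) : ℂ[X]) =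
      C (2*a) * X^5 + C (4*b+lam) * X^4 + C (6*c+a*lam) * X^3 + C (12+8*d+b*lam) * X^2
        + C (6*a+c*lam) * X + C (2*b+d*lam) := by
    simp only [derivative_add, derivative_mul, derivative_C, derivative_X_pow, derivative_X,
      zero_mul, mul_one, zero_add, add_zero, derivative_one, map_add, map_mul, map_ofNat, map_one,
      C_1, C_eq_natCast, derivative_ofNat, derivative_natCast]
    push_cast
    ring
  rw [hP, key] at heq
  have e : ∀ n : ℕ, (C (2*a) * X^5 + C (4*b+lam) * X^4 + C (6*c+a*lam) * X^3
      + C (12+8*d+b*lam) * X^2 + C (6*a+c*lam) * X + C (2*b+d*lam) : ℂ[X]).coeff n = 0 := by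
    rw [heq]; intro n; simp
  have e5 := e 5
  have e4 := e 4
  have e3 := e 3
  have e2 := e 2
  have e0 := e 0
  simp only [coeff_add, coeff_C_mul, coeff_X_pow, coeff_X, coeff_C] at e5 e4 e3 e2 e0
  norm_num at e5 e4 e3 e2 e0
  have ha : a = 0 := e5
  have hc : c = 0 := by rw [ha] at e3; linear_combination e3 / 6
  have hb : b = -lam / 4 := by linear_combination e4 / 4
  have hd : d = (lam ^ 2 / 4 - 12) / 8 := by rw [hb] at e2; linear_combination e2 / 8
  rw [hb, hd] at e0
  refine ⟨by linear_combination 32 * e0, ?_, ?_, ?_⟩ <;> intro hl <;>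
    rw [hP, ha, hc, hb, hd, hl] <;> norm_num <;> ring_nf <;>
    simp [map_neg, map_div₀, map_ofNat]
end

section
/- There is no monic degree-2 polynomial P over ℂ and no λ ∈ ℂ such that P'' + 2(x^4 + δ + 2)P' + (−4x^3 + λ)P = 0 for any δ ∈ ℂ. -/
open Polynomial

theorem octic_s2_nonintegrable :
    ¬ ∃ (P : Polynomial ℂ) (δ lam : ℂ), P.Monic ∧ P.degree = 2 ∧
      derivative (derivative P) + 2 * (X ^ 4 + C δ + 2) * derivative P +
        (-4 * X ^ 3 + C lam) * P = 0 := by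
  rintro ⟨P, δ, lam, hM, hd, hEq⟩
  have hnd : P.natDegree = 2 := natDegree_eq_of_degree_eq_some hd
  set b := P.coeff 1 with hb
  set c := P.coeff 0 with hc
  have hP : P = X ^ 2 + C b * X + C c := by
    ext n
    rcases n with _ | _ | _ | n
    · simp [coeff_X_pow, hc]
    · simp [coeff_X_pow, hb]
    · have h2 : P.coeff 2 = 1 := by
        have := hM.coeff_natDegree
        rwa [hnd] at this
      simp [coeff_X_pow, h2]
    · have : P.coeff (n + 3) = 0 := coeff_eq_zero_of_natDegree_lt (by omega)
      simp [coeff_X_pow, this]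
  have hder : derivative (X ^ 2 + C b * X + C c : ℂ[X]) = C 2 * X + C b := by
    simp
    rw [map_ofNat C 2, one_add_one_eq_two]
  rw [hP, hder] at hEq
  have hder2 : derivative (C 2 * X + C b : ℂ[X]) = C 2 := by simp
  rw [hder2] at hEq
  have h4 := congrArg (fun q : ℂ[X] => q.coeff 4) hEq
  have h3 := congrArg (fun q : ℂ[X] => q.coeff 3) hEq
  have h0 := congrArg (fun q : ℂ[X] => q.coeff 0) hEq
  ring_nf at h4 h3 h0
  simp [coeff_X_pow, coeff_one, coeff_C, coeff_X] at h4 h3 h0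
  rw [h4, h3] at h0
  simp at h0
end

section
/- For δ = −43/8, ε = 105/64, and λ = 3/8, the function ψ(x) = exp(−x^6/6 + x^4/8 − 3x^2/16) satisfies ψ''(x) = (x^{10} − x^8 + x^6 − (43/8)x^4 + (105/64)x^2 − 3/8)ψ(x) for all real x. -/
lemma hasDerivAt_p (x : ℝ) :
    HasDerivAt (fun x : ℝ => -x ^ 6 / 6 + x ^ 4 / 8 - 3 * x ^ 2 / 16)
      (-x ^ 5 + x ^ 3 / 2 - 3 * x / 8) x := by
  have h : HasDerivAt (fun x : ℝ => -x ^ 6 / 6 + x ^ 4 / 8 - 3 * x ^ 2 / 16)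
      (-(6 * x ^ 5) / 6 + 4 * x ^ 3 / 8 - 3 * (2 * x) / 16) x := by
    have h6 := hasDerivAt_pow 6 x
    have h4 := hasDerivAt_pow 4 x
    have h2 := hasDerivAt_pow 2 x
    simpa using ((h6.fun_neg.div_const 6).fun_add (h4.div_const 8)).fun_sub
      ((h2.const_mul 3).div_const 16)
  convert h using 1; ring

lemma hasDerivAt_psi (x : ℝ) :
    HasDerivAt (fun x : ℝ => Real.exp (-x ^ 6 / 6 + x ^ 4 / 8 - 3 * x ^ 2 / 16))
      ((-x ^ 5 + x ^ 3 / 2 - 3 * x / 8) *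
        Real.exp (-x ^ 6 / 6 + x ^ 4 / 8 - 3 * x ^ 2 / 16)) x := by
  simpa [mul_comm] using (hasDerivAt_p x).exp

theorem decatic_s0 (x : ℝ) :
    deriv (deriv (fun x : ℝ => Real.exp (-x ^ 6 / 6 + x ^ 4 / 8 - 3 * x ^ 2 / 16))) x =
      (x ^ 10 - x ^ 8 + x ^ 6 - (43 / 8) * x ^ 4 + (105 / 64) * x ^ 2 - 3 / 8) *
        Real.exp (-x ^ 6 / 6 + x ^ 4 / 8 - 3 * x ^ 2 / 16) := by
  have h1 : deriv (fun x : ℝ => Real.exp (-x ^ 6 / 6 + x ^ 4 / 8 - 3 * x ^ 2 / 16)) =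
      fun x : ℝ => (-x ^ 5 + x ^ 3 / 2 - 3 * x / 8) *
        Real.exp (-x ^ 6 / 6 + x ^ 4 / 8 - 3 * x ^ 2 / 16) := by
    funext y; exact (hasDerivAt_psi y).deriv
  rw [h1]
  have hq : HasDerivAt (fun x : ℝ => -x ^ 5 + x ^ 3 / 2 - 3 * x / 8)
      (-(5 * x ^ 4) + 3 * x ^ 2 / 2 - 3 / 8) x := by
    have h5 := hasDerivAt_pow 5 x
    have h3 := hasDerivAt_pow 3 x
    have hid := hasDerivAt_id x
    have : HasDerivAt (fun x : ℝ => -x ^ 5 + x ^ 3 / 2 - 3 * x / 8)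
        (-(((5 : ℕ) : ℝ) * x ^ (5 - 1)) + ((3 : ℕ) : ℝ) * x ^ (3 - 1) / 2 - 3 * 1 / 8) x :=
      (h5.fun_neg.fun_add (h3.div_const 2)).fun_sub ((hid.const_mul 3).div_const 8)
    convert this using 1 <;> ring
  have h2 := (hq.fun_mul (hasDerivAt_psi x)).deriv
  rw [h2]; ring
end

section
/- For δ = −75/8, a monic degree-2 polynomial P(x) = x^2 + c satisfies P'' − 2(x^5 − x^3/2 + 3x/8)P' − ((δ + 43/8)x^4 + (ε − 105/64)x^2 + 3/8 − λ)P = 0 if and only if c = (64ε − 233)/256, λ = (4096ε^2 − 21632ε + 55185)/16384, and ε is a root of 262144ε^3 − 2338816ε^2 + 8178880ε − 3037945. -/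
open Polynomial

lemma aux_coeffs (b6 b4 b2 b0 : ℂ) :
    C b6 * X ^ 6 + C b4 * X ^ 4 + C b2 * X ^ 2 + C b0 = 0 ↔
      b6 = 0 ∧ b4 = 0 ∧ b2 = 0 ∧ b0 = 0 := by
  constructor
  · intro h
    rw [Polynomial.ext_iff] at h
    have h6 := h 6; have h4 := h 4; have h2 := h 2; have h0 := h 0
    simp [coeff_X_pow] at h6 h4 h2 h0
    exact ⟨h6, h4, h2, h0⟩
  · rintro ⟨h6, h4, h2, h0⟩
    simp [h6, h4, h2, h0]

theorem decatic_s2_ode (ε lam c : ℂ) :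
    (derivative (derivative ((X : Polynomial ℂ) ^ 2 + C c)) -
        2 * (X ^ 5 - C (1 / 2 : ℂ) * X ^ 3 + C (3 / 8 : ℂ) * X) *
          derivative ((X : Polynomial ℂ) ^ 2 + C c) -
        (C (-75 / 8 + 43 / 8 : ℂ) * X ^ 4 + C (ε - 105 / 64) * X ^ 2 +
          C (3 / 8 : ℂ) - C lam) * ((X : Polynomial ℂ) ^ 2 + C c) = 0) ↔
      (c = (64 * ε - 233) / 256 ∧
        lam = (4096 * ε ^ 2 - 21632 * ε + 55185) / 16384 ∧
        262144 * ε ^ 3 - 2338816 * ε ^ 2 + 8178880 * ε - 3037945 = 0) := by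
  have hd1 : derivative ((X : Polynomial ℂ) ^ 2 + C c) = C 2 * X := by simp; rw [one_add_one_eq_two]; exact (map_ofNat C 2).symm
  have hd2 : derivative (derivative ((X : Polynomial ℂ) ^ 2 + C c)) = C 2 := by simp; rw [one_add_one_eq_two]; exact (map_ofNat C 2).symm
  have h1 : derivative (derivative ((X : Polynomial ℂ) ^ 2 + C c)) -
        2 * (X ^ 5 - C (1 / 2 : ℂ) * X ^ 3 + C (3 / 8 : ℂ) * X) *
          derivative ((X : Polynomial ℂ) ^ 2 + C c) -
        (C (-75 / 8 + 43 / 8 : ℂ) * X ^ 4 + C (ε - 105 / 64) * X ^ 2 +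
          C (3 / 8 : ℂ) - C lam) * ((X : Polynomial ℂ) ^ 2 + C c)
      = C (-4 - (-75 / 8 + 43 / 8)) * X ^ 6
        + C (4 * (1 / 2) - (-75 / 8 + 43 / 8) * c - (ε - 105 / 64)) * X ^ 4
        + C (-(4 * (3 / 8)) - (ε - 105 / 64) * c - (3 / 8 - lam)) * X ^ 2
        + C (2 - (3 / 8 - lam) * c) := by
    rw [hd2, hd1]
    simp only [map_add, map_mul, map_sub, map_neg, map_ofNat, map_one, map_div₀]
    ring
  rw [h1, aux_coeffs]
  constructor
  · rintro ⟨-, hA4, hA2, hA0⟩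
    have hc : c = (64 * ε - 233) / 256 := by linear_combination hA4 / 4
    subst hc
    have hl : lam = (4096 * ε ^ 2 - 21632 * ε + 55185) / 16384 := by
      linear_combination hA2
    subst hl
    refine ⟨rfl, rfl, ?_⟩
    linear_combination 4194304 * hA0
  · rintro ⟨hc, hl, hcube⟩
    subst hc; subst hl
    refine ⟨by norm_num, by ring, by ring, ?_⟩
    linear_combination hcube / 4194304
end

section
/- There is no monic degree-2 polynomial P over ℂ, no κ ∈ ℂ, and no λ ∈ ℂ such that P'' − (2x^6 + κ)P' + (4x^5 + κ^2/4 + λ)P = 0. -/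
open Polynomial

theorem dodecatic_s2_nonintegrable :
    ¬ ∃ (P : Polynomial ℂ) (κ lam : ℂ), P.Monic ∧ P.degree = 2 ∧
      derivative (derivative P) - (2 * X ^ 6 + C κ) * derivative P +
        (4 * X ^ 5 + C (κ ^ 2 / 4) + C lam) * P = 0 := by
  rintro ⟨P, κ, lam, hM, hd, h⟩
  have hnd : P.natDegree = 2 := natDegree_eq_of_degree_eq_some hd
  have h2 : P.coeff 2 = 1 := by
    have := hM.coeff_natDegree; rwa [hnd] at this
  have hP : P = X ^ 2 + C (P.coeff 1) * X + C (P.coeff 0) := by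
    ext n
    rcases n with _ | _ | _ | n
    · simp
    · simp
    · simp [h2, coeff_X_pow]
    · have : P.natDegree < n + 3 := by omega
      simp [coeff_eq_zero_of_natDegree_lt this, coeff_X_pow, coeff_C,
        Nat.succ_ne_zero]
  set b := P.coeff 1
  set c := P.coeff 0
  rw [hP] at h
  simp only [derivative_add, derivative_mul, derivative_X_pow, derivative_C,
    derivative_X, zero_mul, mul_one, add_zero, zero_add, mul_zero] at h
  ring_nf at h
  have h6 := congrArg (fun q => q.coeff 6) h
  have h5 := congrArg (fun q => q.coeff 5) h
  have h0 := congrArg (fun q => q.coeff 0) h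
  simp only [coeff_add, coeff_sub, coeff_zero] at h6 h5 h0
  ring_nf at h6 h5 h0
  simp only [coeff_add, coeff_sub, coeff_zero, coeff_mul_C, coeff_C_mul,
    coeff_mul_ofNat, coeff_ofNat_mul, coeff_X_pow, coeff_X, coeff_C] at h6 h5 h0
  norm_num [coeff_X] at h6 h5 h0
  simp [h6, h5] at h0
end
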